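/- For all m > n ≥ 1, write x_1 x_2 ⋯ x_h = E_{1,m−n} if n is even and x_1 x_2 ⋯ x_h = the letterwise complement of E_{1,m−n} (exchanging a and b) if n is odd, where h = |E_{1,m−n}| = 2^{m−n} − 1. Then E_{1,m} = E_{1,n} x_1 E_{1,n} x_2 E_{1,n} ⋯ E_{1,n} x_h E_{1,n}, a concatenation of 2^{m−n} copies of E_{1,n} separated by the single letters x_1, …, x_h. -/
import Mathlib


/-- The alphabet: letters a, b (for the period-doubling sequence) and c (used by Θ₂). -/
inductive Letter : Type
  | a | b | c
deriving DecidableEq, Repr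

open Letter

/-- The period-doubling substitution σ : a ↦ ab, b ↦ aa, extended to words
(the extra letter c is left untouched; it is never produced). -/
def sigmaw : List Letter → List Letter :=
  fun w => w.flatMap fun x => match x with
    | .a => [.a, .b]
    | .b => [.a, .a]
    | .c => [.c]

/-- A_m = σ^m(a). -/
def A (m : ℕ) : List Letter := sigmaw^[m] [.a]

/-- B_m = σ^m(b). -/
def B (m : ℕ) : List Letter := sigmaw^[m] [.b]

/-- δ_m, the last letter of A_m. -/
def delta (m : ℕ) : Letter := (A m).getLastD .a

/-- The period-doubling sequence D, as a function giving its (n+1)-st letter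
(0-indexed); it is the fixed point of σ beginning with a, and A_{n+1} is a
prefix of it of length 2^{n+1} > n. -/
def D (n : ℕ) : Letter := (A (n + 1)).getD n .a

/-- The finite segment D[i .. i+len−1] of the period-doubling sequence,
with 1-based starting position i. -/
def Dseg (i len : ℕ) : List Letter := (List.range len).map fun k => D (i - 1 + k)

/-- u occurs in the finite word w at (1-based) position i. -/
def OccursAt {α : Type*} (u w : List α) (i : ℕ) : Prop :=
  1 ≤ i ∧ i - 1 + u.length ≤ w.length ∧ (w.drop (i - 1)).take u.length = u

/-- u is a factor of the finite word w. -/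
def IsFactor {α : Type*} (u w : List α) : Prop := ∃ i, OccursAt u w i

/-- u occurs in the period-doubling sequence D at (1-based) position i. -/
def DOccursAt (u : List Letter) (i : ℕ) : Prop := 1 ≤ i ∧ Dseg i u.length = u

/-- u is a factor of the period-doubling sequence D. -/
def FactorD (u : List Letter) : Prop := ∃ i, DOccursAt u i

/-- L(u,p): the starting position of the p-th occurrence (p ≥ 1) of u in D. -/
noncomputable def L (u : List Letter) (p : ℕ) : ℕ := Nat.nth (DOccursAt u) (p - 1)

/-- r_p(u): the p-th return word of u (p ≥ 1), i.e. D[L(u,p) .. L(u,p+1)−1];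
r_0(u) is the prefix of D preceding the first occurrence of u. -/
noncomputable def r (u : List Letter) (p : ℕ) : List Letter :=
  if p = 0 then Dseg 1 (L u 1 - 1) else Dseg (L u p) (L u (p + 1) - L u p)

/-- The morphism τ₁ : a ↦ a, b ↦ bb, extended to words. -/
def tau1 : List Letter → List Letter :=
  fun w => w.flatMap fun x => match x with
    | .a => [.a]
    | .b => [.b, .b]
    | .c => [.c]

/-- The morphism τ₂ : a ↦ ab, b ↦ acac, extended to words. -/
def tau2 : List Letter → List Letter :=
  fun w => w.flatMap fun x => match x with
    | .a => [.a, .b]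
    | .b => [.a, .c, .a, .c]
    | .c => [.c]

/-- Θ₁[p], the p-th letter (p ≥ 1) of Θ₁ = τ₁(D): since |τ₁(w)| ≥ |w|, the p-th
letter of Θ₁ is the p-th letter of the image of the length-p prefix of D. -/
def Theta1 (p : ℕ) : Letter := (tau1 (Dseg 1 p)).getD (p - 1) .a

/-- Θ₂[p], the p-th letter (p ≥ 1) of Θ₂ = τ₂(D). -/
def Theta2 (p : ℕ) : Letter := (tau2 (Dseg 1 p)).getD (p - 1) .a

/-- The envelope word E_{1,m} = A_m with its last letter δ_m deleted. -/
def E1 (m : ℕ) : List Letter := (A m).dropLast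

/-- The envelope word E_{2,m} = B_m B_{m−1} with its last letter δ_m deleted. -/
def E2 (m : ℕ) : List Letter := (B m ++ B (m - 1)).dropLast

/-- Enumeration of the envelope words in the order
E_{1,1} ⊏ E_{2,1} ⊏ E_{1,2} ⊏ E_{2,2} ⊏ …. -/
def Eword (k : ℕ) : List Letter := if k % 2 = 0 then E1 (k / 2 + 1) else E2 (k / 2 + 1)

/-- Env(u): the ⊏-least envelope word having u as a factor. -/
noncomputable def Env (u : List Letter) : List Letter :=
  Eword (sInf {k | IsFactor u (Eword k)})

/-- The letterwise complement exchanging a and b. -/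
def comp : Letter → Letter
  | .a => .b
  | .b => .a
  | .c => .c


def dlt (n : ℕ) : Letter := if n % 2 = 0 then .a else .b

lemma comp_dlt (n : ℕ) : comp (dlt n) = dlt (n + 1) := by
  rcases Nat.mod_two_eq_zero_or_one n with h | h <;>
    simp [dlt, h, Nat.add_mod, comp]

lemma sigmaw_append (u v : List Letter) : sigmaw (u ++ v) = sigmaw u ++ sigmaw v := by
  simp [sigmaw]

lemma iter_nil (n : ℕ) : sigmaw^[n] ([] : List Letter) = [] := by
  induction n with
  | zero => rfl
  | succ n ih => rw [Function.iterate_succ_apply, show sigmaw [] = [] from rfl, ih]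

lemma iter_append (n : ℕ) (u v : List Letter) :
    sigmaw^[n] (u ++ v) = sigmaw^[n] u ++ sigmaw^[n] v := by
  induction n generalizing u v with
  | zero => rfl
  | succ n ih =>
    rw [Function.iterate_succ_apply, sigmaw_append, ih,
      Function.iterate_succ_apply, Function.iterate_succ_apply]

lemma A_succ (n : ℕ) : A (n + 1) = A n ++ B n := by
  rw [A, Function.iterate_succ_apply]
  show sigmaw^[n] ([.a] ++ [.b]) = _
  rw [iter_append]; rfl

lemma B_succ (n : ℕ) : B (n + 1) = A n ++ A n := by
  rw [B, Function.iterate_succ_apply]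
  show sigmaw^[n] ([.a] ++ [.a]) = _
  rw [iter_append]; rfl

lemma comp_comp (x : Letter) : comp (comp x) = x := by cases x <;> rfl

lemma A_B_eq (n : ℕ) : A n = E1 n ++ [dlt n] ∧ B n = E1 n ++ [comp (dlt n)] := by
  induction n with
  | zero => exact ⟨rfl, rfl⟩
  | succ n ih =>
    obtain ⟨hA, hB⟩ := ih
    have hE : E1 (n + 1) = A n ++ E1 n := by
      rw [E1, A_succ, hB, ← List.append_assoc, List.dropLast_concat]
    constructor
    · rw [A_succ, hB, hE, comp_dlt, List.append_assoc]
    · rw [B_succ, hE, ← comp_dlt, comp_comp]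
      nth_rewrite 2 [hA]
      rw [List.append_assoc]

lemma noc_A (n : ℕ) : ∀ x ∈ A n, x ≠ .c := by
  induction n with
  | zero => simp [A]
  | succ n ih =>
    intro x hx
    rw [A, Function.iterate_succ_apply'] at hx
    rw [show sigmaw (sigmaw^[n] [.a]) = sigmaw (A n) from rfl, sigmaw, List.mem_flatMap] at hx
    obtain ⟨y, hy, hxy⟩ := hx
    have hyc := ih y hy
    cases y with
    | a => simp at hxy; rcases hxy with rfl | rfl <;> simp
    | b => simp at hxy; rcases hxy with rfl | rfl <;> simp
    | c => exact absurd rfl hyc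

lemma iter_eq_flatMap (n : ℕ) (w : List Letter) :
    sigmaw^[n] w = w.flatMap (fun x => sigmaw^[n] [x]) := by
  induction w with
  | nil => simp [iter_nil]
  | cons x w ih =>
    rw [show (x :: w) = [x] ++ w from rfl, iter_append, ih, List.flatMap_append,
      List.flatMap_cons, List.flatMap_nil, List.append_nil]

lemma flatMap_congr' {α β : Type*} {l : List α} {f g : α → List β}
    (h : ∀ x ∈ l, f x = g x) : l.flatMap f = l.flatMap g := by
  induction l with
  | nil => rfl
  | cons x l ih => simp_all

lemma interleave {α : Type*} (l u : List α) (h : α → α) :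
    l.flatMap (fun x => u ++ [h x]) ++ u = u ++ l.flatMap (fun x => h x :: u) := by
  induction l with
  | nil => simp
  | cons x l ih =>
    simp only [List.flatMap_cons, List.append_assoc] at *
    rw [ih]
    simp

/-- For all m > n ≥ 1, letting x₁x₂⋯x_h be E_{1,m−n} if n is even and
the letterwise complement of E_{1,m−n} if n is odd (so h = 2^{m−n} − 1),
E_{1,m} = E_{1,n} x₁ E_{1,n} x₂ E_{1,n} ⋯ E_{1,n} x_h E_{1,n}. -/
theorem E1_decomposition (m n : ℕ) (hn : 1 ≤ n) (hnm : n < m) :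
    E1 m = E1 n ++
      (if n % 2 = 0 then E1 (m - n) else (E1 (m - n)).map comp).flatMap
        (fun x => x :: E1 n) := by
  set k := m - n with hk
  have hm : m = n + k := by omega
  have hk1 : 1 ≤ k := by omega
  set f : Letter → Letter := fun x => if n % 2 = 0 then x else comp x with hf
  have hAm : A m = (A k).flatMap (fun x => E1 n ++ [f x]) := by
    rw [hm, A, Function.iterate_add_apply, show sigmaw^[k] [Letter.a] = A k from rfl,
      iter_eq_flatMap]
    apply flatMap_congr'
    intro x hx
    have hxc := noc_A k x hx
    cases x with
    | a =>
      show A n = _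
      rw [(A_B_eq n).1, hf]
      rcases Nat.mod_two_eq_zero_or_one n with h | h <;> simp [dlt, h, comp]
    | b =>
      show B n = _
      rw [(A_B_eq n).2, hf]
      rcases Nat.mod_two_eq_zero_or_one n with h | h <;> simp [dlt, h, comp]
    | c => exact absurd rfl hxc
  have hE1m : E1 m = (E1 k).flatMap (fun x => E1 n ++ [f x]) ++ E1 n := by
    rw [E1, hAm, (A_B_eq k).1, List.flatMap_append, List.flatMap_cons, List.flatMap_nil,
      List.append_nil, ← List.append_assoc, List.dropLast_concat]
  rw [hE1m, interleave]
  congr 1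
  rcases Nat.mod_two_eq_zero_or_one n with h | h
  · simp [hf, h]
  · have h0 : ¬ (n % 2 = 0) := by omega
    simp only [h0, hf, if_false, List.flatMap_map]
    try rfl
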